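/- With the Choi–Lu shape operators, the Gauss-equation curvature tensor R and the Weyl tensor C as in the context, the Weyl endomorphisms 𝓒(X,Y) (defined by g(𝓒(X,Y)Z,W) = C(X,Y,Z,W)) satisfy: 𝓒(E_1,E_2) = −(2(n−3)μ²/(n−1))·(E_1 ∧_g E_2); for every 3 ≤ i ≤ n, 𝓒(E_1,E_i) = (2(n−3)μ²/((n−1)(n−2)))·(E_1 ∧_g E_i) and 𝓒(E_2,E_i) = (2(n−3)μ²/((n−1)(n−2)))·(E_2 ∧_g E_i); and for all 3 ≤ i < j ≤ n, 𝓒(E_i,E_j) = −(4μ²/((n−1)(n−2)))·(E_i ∧_g E_j). In particular the Weyl tensor depends only on μ and n. -/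
import Mathlib


noncomputable section

namespace Wintgen

/-- The standard inner product `g` on `ℝ^n`. -/
def gg (n : ℕ) (x y : Fin n → ℝ) : ℝ := ∑ i, x i * y i

/-- The standard orthonormal basis vectors `E_i` (0-indexed). -/
def E (n : ℕ) (i : Fin n) : Fin n → ℝ := fun j => if j = i then 1 else 0

/-- Auxiliary: the `j`-th coordinate of `x` (0 if out of range). -/
def coord (n : ℕ) (x : Fin n → ℝ) (j : ℕ) : ℝ := if h : j < n then x ⟨j, h⟩ else 0

/-- The Choi–Lu shape operator `A_1`. -/
def A1 (n : ℕ) (a μ : ℝ) (x : Fin n → ℝ) : Fin n → ℝ := fun i =>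
  if (i : ℕ) = 0 then a * x i + μ * coord n x 1
  else if (i : ℕ) = 1 then μ * coord n x 0 + a * x i
  else a * x i

/-- The Choi–Lu shape operator `A_2`. -/
def A2 (n : ℕ) (b μ : ℝ) (x : Fin n → ℝ) : Fin n → ℝ := fun i =>
  if (i : ℕ) = 0 then (b + μ) * x i
  else if (i : ℕ) = 1 then (b - μ) * x i
  else b * x i

/-- The Choi–Lu shape operator `A_3 = c • id`. -/
def A3 (n : ℕ) (c : ℝ) (x : Fin n → ℝ) : Fin n → ℝ := fun i => c * x i

/-- The Gauss-equation curvature tensor `R`. -/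
def Rt (n : ℕ) (a b c μ k : ℝ) (X Y Z W : Fin n → ℝ) : ℝ :=
  (gg n (A1 n a μ X) W * gg n (A1 n a μ Y) Z - gg n (A1 n a μ X) Z * gg n (A1 n a μ Y) W)
  + (gg n (A2 n b μ X) W * gg n (A2 n b μ Y) Z - gg n (A2 n b μ X) Z * gg n (A2 n b μ Y) W)
  + (gg n (A3 n c X) W * gg n (A3 n c Y) Z - gg n (A3 n c X) Z * gg n (A3 n c Y) W)
  + k * (gg n X W * gg n Y Z - gg n X Z * gg n Y W)

/-- The Ricci tensor `Ricc(X,Y) = ∑ i, R(E_i, X, Y, E_i)`. -/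
def Ricc (n : ℕ) (a b c μ k : ℝ) (X Y : Fin n → ℝ) : ℝ :=
  ∑ i, Rt n a b c μ k (E n i) X Y (E n i)

/-- The scalar curvature `τ`. -/
def tau (n : ℕ) (a b c μ k : ℝ) : ℝ := ∑ i, Ricc n a b c μ k (E n i) (E n i)

/-- The Kulkarni–Nomizu product of two bilinear forms. -/
def KN (n : ℕ) (A B : (Fin n → ℝ) → (Fin n → ℝ) → ℝ) (X1 X2 X3 X4 : Fin n → ℝ) : ℝ :=
  A X1 X4 * B X2 X3 + A X2 X3 * B X1 X4 - A X1 X3 * B X2 X4 - A X2 X4 * B X1 X3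

/-- The Weyl conformal curvature tensor `C`. -/
def Ct (n : ℕ) (a b c μ k : ℝ) (X Y Z W : Fin n → ℝ) : ℝ :=
  Rt n a b c μ k X Y Z W
    - (1 / ((n : ℝ) - 2)) * KN n (gg n) (Ricc n a b c μ k) X Y Z W
    + (tau n a b c μ k / (2 * ((n : ℝ) - 1) * ((n : ℝ) - 2))) * KN n (gg n) (gg n) X Y Z W

/-- The endomorphism `(X ∧_A Y)` applied to `Z`. -/
def wedge (n : ℕ) (A : (Fin n → ℝ) → (Fin n → ℝ) → ℝ) (X Y Z : Fin n → ℝ) : Fin n → ℝ :=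
  fun j => A Y Z * X j - A X Z * Y j

/-- The endomorphism determined by `g(Op(X,Y)Z, W) = T(X,Y,Z,W)`:
its `j`-th component is `T(X,Y,Z,E_j)`. -/
def curvOp (n : ℕ) (T : (Fin n → ℝ) → (Fin n → ℝ) → (Fin n → ℝ) → (Fin n → ℝ) → ℝ)
    (X Y Z : Fin n → ℝ) : Fin n → ℝ := fun j => T X Y Z (E n j)

/-- Derivation-type action of a family of operators on a (0,4)-tensor. -/
def dotT (n : ℕ) (Op : (Fin n → ℝ) → (Fin n → ℝ) → (Fin n → ℝ) → (Fin n → ℝ))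
    (T : (Fin n → ℝ) → (Fin n → ℝ) → (Fin n → ℝ) → (Fin n → ℝ) → ℝ)
    (X1 X2 X3 X4 X Y : Fin n → ℝ) : ℝ :=
  - T (Op X Y X1) X2 X3 X4 - T X1 (Op X Y X2) X3 X4
  - T X1 X2 (Op X Y X3) X4 - T X1 X2 X3 (Op X Y X4)

/-- The (0,6)-tensor `R · C`. -/
def RC (n : ℕ) (a b c μ k : ℝ) :=
  dotT n (fun X Y => curvOp n (Rt n a b c μ k) X Y) (Ct n a b c μ k)

/-- The (0,6)-tensor `C · R`. -/
def CR (n : ℕ) (a b c μ k : ℝ) :=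
  dotT n (fun X Y => curvOp n (Ct n a b c μ k) X Y) (Rt n a b c μ k)

/-- The Tachibana tensor `Q(A, T)`. -/
def Q (n : ℕ) (A : (Fin n → ℝ) → (Fin n → ℝ) → ℝ)
    (T : (Fin n → ℝ) → (Fin n → ℝ) → (Fin n → ℝ) → (Fin n → ℝ) → ℝ) :=
  dotT n (fun X Y => wedge n A X Y) T

-- aux
def Pb (n : ℕ) (x y : Fin n → ℝ) : ℝ := coord n x 1 * coord n y 0 + coord n x 0 * coord n y 1
def Qb (n : ℕ) (x y : Fin n → ℝ) : ℝ := coord n x 0 * coord n y 0 - coord n x 1 * coord n y 1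
def hb (n : ℕ) (x y : Fin n → ℝ) : ℝ := coord n x 0 * coord n y 0 + coord n x 1 * coord n y 1

lemma gg_E_left {n : ℕ} (i : Fin n) (x : Fin n → ℝ) : gg n (E n i) x = x i := by
  simp [gg, E]
lemma gg_E_right {n : ℕ} (i : Fin n) (x : Fin n → ℝ) : gg n x (E n i) = x i := by
  simp [gg, E]
lemma coord_lt {n m : ℕ} (h : m < n) (x : Fin n → ℝ) : coord n x m = x ⟨m, h⟩ := by
  simp [coord, h]
lemma coord_E {n : ℕ} (i : Fin n) (m : ℕ) :
    coord n (E n i) m = if (i : ℕ) = m then 1 else 0 := by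
  unfold coord E
  by_cases h : m < n
  · rw [dif_pos h]
    by_cases h2 : (i : ℕ) = m
    · rw [if_pos h2, if_pos (by simp [Fin.ext_iff, h2])]
    · rw [if_neg h2, if_neg (by simp [Fin.ext_iff]; omega)]
  · rw [dif_neg h, if_neg (by omega)]
lemma sum_ind {n : ℕ} (m : ℕ) (hm : m < n) (f : Fin n → ℝ) :
    ∑ i : Fin n, (if (i : ℕ) = m then f i else 0) = f ⟨m, hm⟩ := by
  rw [Fintype.sum_eq_single (⟨m, hm⟩ : Fin n)]
  · simp
  · intro i hi
    rw [if_neg]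
    simpa [Fin.ext_iff] using hi
lemma gA1 {n : ℕ} (hn : 2 ≤ n) (a μ : ℝ) (x w : Fin n → ℝ) :
    gg n (A1 n a μ x) w
      = a * gg n x w + μ * (coord n x 1 * coord n w 0 + coord n x 0 * coord n w 1) := by
  have h0 : 0 < n := by omega
  have h1 : 1 < n := by omega
  unfold gg A1
  have key : ∀ i : Fin n,
      (if (i : ℕ) = 0 then a * x i + μ * coord n x 1
       else if (i : ℕ) = 1 then μ * coord n x 0 + a * x i
       else a * x i) * w i
      = a * (x i * w i) + (if (i : ℕ) = 0 then μ * coord n x 1 * w i else 0)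
        + (if (i : ℕ) = 1 then μ * coord n x 0 * w i else 0) := by
    intro i
    rcases Nat.lt_or_ge (i : ℕ) 1 with h | h
    · have : (i : ℕ) = 0 := by omega
      simp only [this]; norm_num; ring
    · rcases Nat.lt_or_ge (i : ℕ) 2 with h' | h'
      · have : (i : ℕ) = 1 := by omega
        simp only [this]; norm_num; ring
      · rw [if_neg (by omega), if_neg (by omega), if_neg (by omega), if_neg (by omega)]
        ring
  rw [Finset.sum_congr rfl (fun i _ => key i)]
  rw [Finset.sum_add_distrib, Finset.sum_add_distrib, ← Finset.mul_sum,
    sum_ind 0 h0, sum_ind 1 h1, coord_lt h0 w, coord_lt h1 w]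
  ring
lemma gA2 {n : ℕ} (hn : 2 ≤ n) (b μ : ℝ) (x w : Fin n → ℝ) :
    gg n (A2 n b μ x) w
      = b * gg n x w + μ * (coord n x 0 * coord n w 0 - coord n x 1 * coord n w 1) := by
  have h0 : 0 < n := by omega
  have h1 : 1 < n := by omega
  unfold gg A2
  have key : ∀ i : Fin n,
      (if (i : ℕ) = 0 then (b + μ) * x i
       else if (i : ℕ) = 1 then (b - μ) * x i
       else b * x i) * w i
      = b * (x i * w i) + (if (i : ℕ) = 0 then μ * x i * w i else 0)
        - (if (i : ℕ) = 1 then μ * x i * w i else 0) := by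
    intro i
    rcases Nat.lt_or_ge (i : ℕ) 1 with h | h
    · have : (i : ℕ) = 0 := by omega
      simp only [this]; norm_num; ring
    · rcases Nat.lt_or_ge (i : ℕ) 2 with h' | h'
      · have : (i : ℕ) = 1 := by omega
        simp only [this]; norm_num; ring
      · rw [if_neg (by omega), if_neg (by omega), if_neg (by omega), if_neg (by omega)]
        ring
  rw [Finset.sum_congr rfl (fun i _ => key i)]
  rw [Finset.sum_sub_distrib, Finset.sum_add_distrib, ← Finset.mul_sum,
    sum_ind 0 h0, sum_ind 1 h1, coord_lt h0 x, coord_lt h1 x, coord_lt h0 w, coord_lt h1 w]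
  ring
lemma gA3 {n : ℕ} (c : ℝ) (x w : Fin n → ℝ) :
    gg n (A3 n c x) w = c * gg n x w := by
  unfold gg A3
  rw [Finset.mul_sum]
  exact Finset.sum_congr rfl (fun i _ => by ring)

lemma Rt_eq {n : ℕ} (hn : 2 ≤ n) (a b c μ k : ℝ) (x y z w : Fin n → ℝ) :
    Rt n a b c μ k x y z w
      = (a^2 + b^2 + c^2 + k) * (gg n x w * gg n y z - gg n x z * gg n y w)
        + a * μ * (gg n x w * Pb n y z + Pb n x w * gg n y z
            - gg n x z * Pb n y w - Pb n x z * gg n y w)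
        + b * μ * (gg n x w * Qb n y z + Qb n x w * gg n y z
            - gg n x z * Qb n y w - Qb n x z * gg n y w)
        + μ^2 * (Pb n x w * Pb n y z - Pb n x z * Pb n y w
            + Qb n x w * Qb n y z - Qb n x z * Qb n y w) := by
  unfold Rt Pb Qb
  rw [gA1 hn, gA1 hn, gA1 hn, gA1 hn, gA2 hn, gA2 hn, gA2 hn, gA2 hn,
    gA3, gA3, gA3, gA3]
  ring
lemma Ricc_eq {n : ℕ} (hn : 2 ≤ n) (a b c μ k : ℝ) (x y : Fin n → ℝ) :
    Ricc n a b c μ k x y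
      = (a^2 + b^2 + c^2 + k) * ((n : ℝ) - 1) * gg n x y
        + ((n : ℝ) - 2) * μ * (a * Pb n x y + b * Qb n x y)
        - 2 * μ^2 * hb n x y := by
  have h0 : 0 < n := by omega
  have h1 : 1 < n := by omega
  unfold Ricc
  have key : ∀ i : Fin n, Rt n a b c μ k (E n i) x y (E n i)
      = ((a^2 + b^2 + c^2 + k) * (gg n x y - x i * y i)
          + a * μ * Pb n x y + b * μ * Qb n x y)
        + (if (i : ℕ) = 0 then
            a * μ * (-(y i) * coord n x 1 - (x i) * coord n y 1)
            + b * μ * (gg n x y - (y i) * coord n x 0 - (x i) * coord n y 0)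
            + μ^2 * (Qb n x y - coord n x 0 * coord n y 0 - coord n x 1 * coord n y 1)
          else 0)
        + (if (i : ℕ) = 1 then
            a * μ * (-(y i) * coord n x 0 - (x i) * coord n y 0)
            + b * μ * (-(gg n x y) + (y i) * coord n x 1 + (x i) * coord n y 1)
            + μ^2 * (-(Qb n x y) - coord n x 0 * coord n y 0 - coord n x 1 * coord n y 1)
          else 0) := by
    intro i
    rw [Rt_eq hn]
    unfold Pb Qb
    simp only [gg_E_left, gg_E_right, coord_E]
    have hEii : E n i i = 1 := by simp [E]
    rw [hEii]
    split_ifs with H1 H2 <;> first | ring1 | (exfalso; omega)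
  rw [Finset.sum_congr rfl (fun i _ => key i)]
  rw [Finset.sum_add_distrib, Finset.sum_add_distrib, Finset.sum_add_distrib,
    Finset.sum_add_distrib, sum_ind 0 h0, sum_ind 1 h1]
  have e1 : ∑ i : Fin n, (a^2 + b^2 + c^2 + k) * (gg n x y - x i * y i)
      = (a^2 + b^2 + c^2 + k) * ((n : ℝ) * gg n x y - gg n x y) := by
    rw [← Finset.mul_sum, Finset.sum_sub_distrib, Finset.sum_const]
    simp [gg, mul_comm]
  have e2 : ∑ _i : Fin n, a * μ * Pb n x y = (n : ℝ) * (a * μ * Pb n x y) := by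
    rw [Finset.sum_const]; simp [mul_comm]
  have e3 : ∑ _i : Fin n, b * μ * Qb n x y = (n : ℝ) * (b * μ * Qb n x y) := by
    rw [Finset.sum_const]; simp [mul_comm]
  rw [e1, e2, e3]
  unfold Pb Qb hb
  rw [coord_lt h0 x, coord_lt h1 x, coord_lt h0 y, coord_lt h1 y]
  ring
lemma tau_eq {n : ℕ} (hn : 2 ≤ n) (a b c μ k : ℝ) :
    tau n a b c μ k = (a^2 + b^2 + c^2 + k) * (n : ℝ) * ((n : ℝ) - 1) - 4 * μ^2 := by
  have h0 : 0 < n := by omega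
  have h1 : 1 < n := by omega
  unfold tau
  have key : ∀ i : Fin n, Ricc n a b c μ k (E n i) (E n i)
      = (a^2 + b^2 + c^2 + k) * ((n : ℝ) - 1)
        + (if (i : ℕ) = 0 then ((n : ℝ) - 2) * μ * b - 2 * μ^2 else 0)
        + (if (i : ℕ) = 1 then -(((n : ℝ) - 2) * μ * b) - 2 * μ^2 else 0) := by
    intro i
    rw [Ricc_eq hn]
    unfold Pb Qb hb
    simp only [coord_E, gg_E_left]
    have hEii : E n i i = 1 := by simp [E]
    rw [hEii]
    split_ifs with H1 H2 <;> first | ring1 | (exfalso; omega)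
  rw [Finset.sum_congr rfl (fun i _ => key i)]
  rw [Finset.sum_add_distrib, Finset.sum_add_distrib, sum_ind 0 h0, sum_ind 1 h1,
    Finset.sum_const, Finset.card_univ, Fintype.card_fin, nsmul_eq_mul]
  ring

lemma Ct_eq {n : ℕ} (hn : 4 ≤ n) (a b c μ k : ℝ) (x y z w : Fin n → ℝ) :
    Ct n a b c μ k x y z w
      = μ^2 * ((Pb n x w * Pb n y z - Pb n x z * Pb n y w
            + Qb n x w * Qb n y z - Qb n x z * Qb n y w)
          + (2 / ((n : ℝ) - 2)) * (gg n x w * hb n y z + hb n x w * gg n y z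
              - gg n x z * hb n y w - hb n x z * gg n y w)
          - (4 / (((n : ℝ) - 1) * ((n : ℝ) - 2))) * (gg n x w * gg n y z
              - gg n x z * gg n y w)) := by
  have hn2 : 2 ≤ n := by omega
  have h4 : (4 : ℝ) ≤ (n : ℝ) := by exact_mod_cast hn
  have hd1 : (n : ℝ) - 1 ≠ 0 := by linarith
  have hd2 : (n : ℝ) - 2 ≠ 0 := by linarith
  unfold Ct KN
  rw [Rt_eq hn2]
  simp only [Ricc_eq hn2, tau_eq hn2]
  field_simp
  ring

set_option maxHeartbeats 2000000 in
/-- the Weyl endomorphisms `𝓒(E_u, E_v)` in Choi–Lu frames; in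
particular the Weyl tensor depends only on `μ` and `n`. -/
theorem statement_2 (n : ℕ) (hn : 4 ≤ n) (a b c μ k : ℝ) :
    (∀ Z : Fin n → ℝ,
      curvOp n (Ct n a b c μ k) (E n ⟨0, by omega⟩) (E n ⟨1, by omega⟩) Z
        = (-(2 * ((n : ℝ) - 3) * μ ^ 2 / ((n : ℝ) - 1))) •
            wedge n (gg n) (E n ⟨0, by omega⟩) (E n ⟨1, by omega⟩) Z)
    ∧ (∀ i : Fin n, 2 ≤ (i : ℕ) → ∀ Z : Fin n → ℝ,
      curvOp n (Ct n a b c μ k) (E n ⟨0, by omega⟩) (E n i) Z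
        = (2 * ((n : ℝ) - 3) * μ ^ 2 / (((n : ℝ) - 1) * ((n : ℝ) - 2))) •
            wedge n (gg n) (E n ⟨0, by omega⟩) (E n i) Z)
    ∧ (∀ i : Fin n, 2 ≤ (i : ℕ) → ∀ Z : Fin n → ℝ,
      curvOp n (Ct n a b c μ k) (E n ⟨1, by omega⟩) (E n i) Z
        = (2 * ((n : ℝ) - 3) * μ ^ 2 / (((n : ℝ) - 1) * ((n : ℝ) - 2))) •
            wedge n (gg n) (E n ⟨1, by omega⟩) (E n i) Z)
    ∧ (∀ i j : Fin n, 2 ≤ (i : ℕ) → (i : ℕ) < (j : ℕ) → ∀ Z : Fin n → ℝ,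
      curvOp n (Ct n a b c μ k) (E n i) (E n j) Z
        = (-(4 * μ ^ 2 / (((n : ℝ) - 1) * ((n : ℝ) - 2)))) •
            wedge n (gg n) (E n i) (E n j) Z)
    ∧ (∀ a' b' c' k' : ℝ, ∀ X Y Z W : Fin n → ℝ,
        Ct n a b c μ k X Y Z W = Ct n a' b' c' μ k' X Y Z W) := by
  have h0 : 0 < n := by omega
  have h1 : 1 < n := by omega
  have h4 : (4 : ℝ) ≤ (n : ℝ) := by exact_mod_cast hn
  have hd1 : (n : ℝ) - 1 ≠ 0 := by linarith
  have hd2 : (n : ℝ) - 2 ≠ 0 := by linarith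
  refine ⟨?_, ?_, ?_, ?_, ?_⟩
  · intro Z
    funext j
    show Ct n a b c μ k _ _ Z (E n j) = _
    rw [Ct_eq hn]
    unfold Pb Qb hb wedge
    simp only [Pi.smul_apply, smul_eq_mul, gg_E_left, gg_E_right, coord_E,
      coord_lt h0, coord_lt h1, E, Fin.ext_iff, Fin.val_mk]
    split_ifs <;> first | (exfalso; first | assumption | omega) | (field_simp; try ring1)
  · intro i hi Z
    funext j
    show Ct n a b c μ k _ _ Z (E n j) = _
    rw [Ct_eq hn]
    unfold Pb Qb hb wedge
    simp only [Pi.smul_apply, smul_eq_mul, gg_E_left, gg_E_right, coord_E,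
      coord_lt h0, coord_lt h1, E, Fin.ext_iff, Fin.val_mk]
    split_ifs <;> first | (exfalso; first | assumption | omega) | (field_simp; try ring1)
  · intro i hi Z
    funext j
    show Ct n a b c μ k _ _ Z (E n j) = _
    rw [Ct_eq hn]
    unfold Pb Qb hb wedge
    simp only [Pi.smul_apply, smul_eq_mul, gg_E_left, gg_E_right, coord_E,
      coord_lt h0, coord_lt h1, E, Fin.ext_iff, Fin.val_mk]
    split_ifs <;> first | (exfalso; first | assumption | omega) | (field_simp; try ring1)
  · intro i j hi hij Z
    funext m
    show Ct n a b c μ k _ _ Z (E n m) = _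
    rw [Ct_eq hn]
    unfold Pb Qb hb wedge
    simp only [Pi.smul_apply, smul_eq_mul, gg_E_left, gg_E_right, coord_E,
      coord_lt h0, coord_lt h1, E, Fin.ext_iff, Fin.val_mk]
    split_ifs <;> first | (exfalso; first | assumption | omega) | (field_simp; try ring1)
  · intro a' b' c' k' X Y Z W
    rw [Ct_eq hn, Ct_eq hn]

end Wintgen
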